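/- Fix an integer d with 2 ≤ d ≤ 7. Then for every c ∈ [0,1), every x ∈ S_{0,1,c} and every ε > 0, there exists an integer K such that for all k ≥ K: a_{c_g} − ε ≤ ψ^{(2k)}(x)_1 ≤ min(1, b_{c_g} + ε) and ψ^{(2k)}(x)_n ≤ min(1, c_g + ε) for all n ≥ 2. -/

import Mathlib

/-!
`ψ` maps `S_{0,1,c}` into `S_{0,1,G(c)}` with `G = g(1, ·)`, so the coordinates `n ≥ 2` are
bounded by the orbit `Gᵏ(c)`. `G` is strictly convex on `[0, ∞)` with fixed points `c_g` and `1`,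
hence `G(t) > t` below `c_g` and `G(t) < t` between `c_g` and `1`: the orbit is monotone and
converges to `c_g`.

Over two steps the first coordinate becomes `f(1 + y₂, f(1 + x₂, x₁))`, which is monotone in
each argument, so it is squeezed between the orbits `L_{k+1} = i(G^{2k}(c), L_k)` from `0` and
`U_{k+1} = j(G^{2k+1}(c), U_k)` from `1`. In the coordinate `u = 1/(1 + 2y)` every `f(α, ·)` with
`α ∈ [1, 2]` is a `0.995`-contraction, up to an error `|α - α'|` in the parameter (this is where
`d ≤ 7` enters), hence `L_k → a_{c_g}` and `U_k → b_{c_g}`.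
-/

/-- The map `ψ` on sequences of nonnegative reals (indices `n ≥ 1` are meaningful;
coordinate `0` is set to `0`). -/
noncomputable def psi (d : ℕ) (x : ℕ → ℝ) : ℕ → ℝ := fun n =>
  if n = 0 then 0
  else if n = 1 then ((1 + x 1 + x 1 * x 2) / (1 + 2 * x 1)) ^ d
  else x (n - 1) ^ d *
    ((1 + x n + x n * x (n + 1)) / (1 + x (n - 1) + x (n - 1) * x n)) ^ d

/-- The set `S_{a,b,c}`. -/
def Sabc (a b c : ℝ) : Set (ℕ → ℝ) :=
  {x | (∀ n, 1 ≤ n → 0 ≤ x n) ∧ a ≤ x 1 ∧ x 1 ≤ b ∧ ∀ n, 2 ≤ n → x n ≤ c}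

noncomputable def fMap (d : ℕ) (α x : ℝ) : ℝ := ((1 + α * x) / (1 + 2 * x)) ^ d

noncomputable def gMap (d : ℕ) (b x : ℝ) : ℝ :=
  b ^ d * ((1 + x + x ^ 2) / (1 + b + b * x)) ^ d

/-- `i(c,x) = f(1, f(1+c, x))`. -/
noncomputable def iMap (d : ℕ) (c x : ℝ) : ℝ := fMap d 1 (fMap d (1 + c) x)

/-- `j(c,x) = f(1+c, f(1, x))`. -/
noncomputable def jMap (d : ℕ) (c x : ℝ) : ℝ := fMap d (1 + c) (fMap d 1 x)

open Set Filter Topology Function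

section fMap

variable {d : ℕ} {α α' y y' : ℝ}

lemma fMap_nonneg (hα : 0 ≤ α) (hy : 0 ≤ y) : 0 ≤ fMap d α y := by
  unfold fMap
  positivity

lemma fMap_le_one (hα0 : 0 ≤ α) (hα2 : α ≤ 2) (hy : 0 ≤ y) : fMap d α y ≤ 1 := by
  unfold fMap
  refine pow_le_one₀ (by positivity) ?_
  rw [div_le_one (by positivity)]
  nlinarith

lemma fMap_mono_left (hα : 0 ≤ α) (hαα' : α ≤ α') (hy : 0 ≤ y) :
    fMap d α y ≤ fMap d α' y := by
  unfold fMap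
  gcongr

lemma fMap_anti_right (hα0 : 0 ≤ α) (hα2 : α ≤ 2) (hy : 0 ≤ y) (hyy' : y ≤ y') :
    fMap d α y' ≤ fMap d α y := by
  have hy' : 0 ≤ y' := hy.trans hyy'
  unfold fMap
  refine pow_le_pow_left₀ (by positivity) ?_ d
  rw [div_le_div_iff₀ (by positivity) (by positivity)]
  nlinarith

end fMap

lemma psi_one (d : ℕ) (x : ℕ → ℝ) : psi d x 1 = fMap d (1 + x 2) (x 1) := by
  simp only [psi, fMap, one_ne_zero, if_false, if_true]
  ring_nf

lemma psi_of_two_le (d : ℕ) (x : ℕ → ℝ) {n : ℕ} (hn : 2 ≤ n) :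
    psi d x n =
      (x (n - 1) * ((1 + x n + x n * x (n + 1)) / (1 + x (n - 1) + x (n - 1) * x n))) ^ d := by
  rw [psi, if_neg (by omega), if_neg (by omega), mul_pow]

lemma gMap_one_apply (d : ℕ) (t : ℝ) : gMap d 1 t = ((1 + t + t ^ 2) / (2 + t)) ^ d := by
  rw [gMap, one_pow, one_mul]
  ring_nf

lemma mul_div_le_of_le_one {u v w c : ℝ} (hu0 : 0 ≤ u) (hu1 : u ≤ 1) (hv0 : 0 ≤ v) (hvc : v ≤ c)
    (hwc : w ≤ c) :
    u * ((1 + v + v * w) / (1 + u + u * v)) ≤ (1 + c + c ^ 2) / (2 + c) := by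
  have hc0 : 0 ≤ c := hv0.trans hvc
  rw [mul_div_assoc', div_le_div_iff₀ (by positivity) (by positivity)]
  nlinarith [mul_le_mul_of_nonneg_left hwc hv0, mul_nonneg hu0 hv0,
    mul_nonneg (sub_nonneg.2 hu1) hv0, mul_nonneg hu0 (sub_nonneg.2 hvc),
    mul_nonneg (mul_nonneg hu0 hv0) (sub_nonneg.2 hwc)]

section gMap

variable {d : ℕ} {t : ℝ}

lemma gMap_one_nonneg (ht : 0 ≤ t) : 0 ≤ gMap d 1 t := by
  rw [gMap_one_apply]
  positivity

lemma gMap_one_one : gMap d 1 1 = 1 := by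
  norm_num [gMap]

lemma monotoneOn_gMap_one : MonotoneOn (gMap d 1) (Ici 0) := by
  intro s (hs : 0 ≤ s) t (ht : 0 ≤ t) hst
  simp only [gMap_one_apply]
  refine pow_le_pow_left₀ (by positivity) ?_ d
  rw [div_le_div_iff₀ (by positivity) (by positivity)]
  nlinarith [mul_nonneg hs ht, mul_nonneg (mul_nonneg hs ht) (sub_nonneg.2 hst)]

lemma mapsTo_gMap_one : MapsTo (gMap d 1) (Icc 0 1) (Icc 0 1) := fun _ hs =>
  ⟨gMap_one_nonneg hs.1,
    (monotoneOn_gMap_one hs.1 (mem_Ici.2 zero_le_one) hs.2).trans_eq gMap_one_one⟩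

lemma continuousAt_gMap_one (ht : 0 ≤ t) : ContinuousAt (gMap d 1) t := by
  unfold gMap
  have : 1 + 1 + 1 * t ≠ 0 := by linarith
  fun_prop (disch := assumption)

end gMap

section psi

variable {d : ℕ} {c : ℝ} {x : ℕ → ℝ}

lemma psi_mem_Sabc (hc1 : c ≤ 1) (hx : x ∈ Sabc 0 1 c) : psi d x ∈ Sabc 0 1 (gMap d 1 c) := by
  obtain ⟨hx0, hx10, hx11, hxc⟩ := hx
  have hx20 : 0 ≤ x 2 := hx0 2 (by norm_num)
  have htail : ∀ n, 2 ≤ n → 0 ≤ psi d x n ∧ psi d x n ≤ gMap d 1 c := by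
    intro n hn
    have hu0 := hx0 (n - 1) (by omega)
    have hv0 := hx0 n (by omega)
    have hw0 := hx0 (n + 1) (by omega)
    have hu1 : x (n - 1) ≤ 1 := by
      rcases (show n = 2 ∨ 3 ≤ n by omega) with rfl | hn3
      · exact hx11
      · exact (hxc (n - 1) (by omega)).trans hc1
    rw [psi_of_two_le d x hn, gMap_one_apply]
    have hbase : 0 ≤ x (n - 1) * ((1 + x n + x n * x (n + 1)) /
        (1 + x (n - 1) + x (n - 1) * x n)) := by positivity
    exact ⟨pow_nonneg hbase d, pow_le_pow_left₀ hbase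
      (mul_div_le_of_le_one hu0 hu1 hv0 (hxc n hn) (hxc (n + 1) (by omega))) d⟩
  have h1 : 0 ≤ psi d x 1 ∧ psi d x 1 ≤ 1 := by
    rw [psi_one]
    exact ⟨fMap_nonneg (by linarith) hx10,
      fMap_le_one (by linarith) (by linarith [hxc 2 le_rfl]) hx10⟩
  refine ⟨fun n hn => ?_, h1.1, h1.2, fun n hn => (htail n hn).2⟩
  rcases (show n = 1 ∨ 2 ≤ n by omega) with rfl | hn2
  · exact h1.1
  · exact (htail n hn2).1

lemma psi_iterate_mem_Sabc (hc0 : 0 ≤ c) (hc1 : c ≤ 1) (hx : x ∈ Sabc 0 1 c) (k : ℕ) :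
    (psi d)^[k] x ∈ Sabc 0 1 ((gMap d 1)^[k] c) := by
  induction k with
  | zero => exact hx
  | succ k ih =>
    rw [iterate_succ_apply', iterate_succ_apply']
    exact psi_mem_Sabc (mapsTo_gMap_one.iterate k ⟨hc0, hc1⟩).2 ih

lemma iMap_le_psi_psi_one {L : ℝ} (hc1 : c ≤ 1) (hx : x ∈ Sabc 0 1 c) (hL0 : 0 ≤ L)
    (hL : L ≤ x 1) : iMap d c L ≤ psi d (psi d x) 1 := by
  have hy20 : 0 ≤ psi d x 2 := (psi_mem_Sabc hc1 hx).1 2 (by norm_num)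
  obtain ⟨hx0, hx10, -, hxc⟩ := hx
  have hx20 : 0 ≤ x 2 := hx0 2 (by norm_num)
  have hx2c : x 2 ≤ c := hxc 2 le_rfl
  have hinner : fMap d (1 + x 2) (x 1) ≤ fMap d (1 + c) L :=
    (fMap_mono_left (by linarith) (by linarith) hx10).trans
      (fMap_anti_right (by linarith) (by linarith) hL0 hL)
  rw [psi_one, psi_one]
  calc iMap d c L = fMap d 1 (fMap d (1 + c) L) := rfl
    _ ≤ fMap d 1 (fMap d (1 + x 2) (x 1)) :=
      fMap_anti_right zero_le_one one_le_two (fMap_nonneg (by linarith) hx10) hinner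
    _ ≤ fMap d (1 + psi d x 2) (fMap d (1 + x 2) (x 1)) :=
      fMap_mono_left zero_le_one (by linarith) (fMap_nonneg (by linarith) hx10)

lemma psi_psi_one_le_jMap {U : ℝ} (hc1 : c ≤ 1) (hx : x ∈ Sabc 0 1 c) (hU : x 1 ≤ U) :
    psi d (psi d x) 1 ≤ jMap d (gMap d 1 c) U := by
  have hy := psi_mem_Sabc (d := d) hc1 hx
  obtain ⟨hx0, hx10, -, hxc⟩ := hx
  have hx20 : 0 ≤ x 2 := hx0 2 (by norm_num)
  have hG1 : gMap d 1 c ≤ 1 := (mapsTo_gMap_one ⟨hx20.trans (hxc 2 le_rfl), hc1⟩).2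
  have hy20 : 0 ≤ psi d x 2 := hy.1 2 (by norm_num)
  have hy2G : psi d x 2 ≤ gMap d 1 c := hy.2.2.2 2 le_rfl
  have hinner : fMap d 1 U ≤ fMap d (1 + x 2) (x 1) :=
    (fMap_anti_right zero_le_one one_le_two hx10 hU).trans
      (fMap_mono_left zero_le_one (by linarith) hx10)
  rw [psi_one, psi_one]
  calc fMap d (1 + psi d x 2) (fMap d (1 + x 2) (x 1))
      ≤ fMap d (1 + gMap d 1 c) (fMap d (1 + x 2) (x 1)) :=
        fMap_mono_left (by linarith) (by linarith) (fMap_nonneg (by linarith) hx10)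
    _ ≤ fMap d (1 + gMap d 1 c) (fMap d 1 U) :=
        fMap_anti_right (by linarith) (by linarith)
          (fMap_nonneg zero_le_one (hx10.trans hU)) hinner

end psi

def nonautOrbit (T : ℝ → ℝ → ℝ) (c : ℕ → ℝ) (y₀ : ℝ) : ℕ → ℝ
  | 0 => y₀
  | k + 1 => T (c k) (nonautOrbit T c y₀ k)

lemma nonautOrbit_mem {T : ℝ → ℝ → ℝ} {c : ℕ → ℝ} {y₀ : ℝ} {s : Set ℝ}
    (hT : ∀ k, MapsTo (T (c k)) s s) (hy₀ : y₀ ∈ s) (k : ℕ) : nonautOrbit T c y₀ k ∈ s := by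
  induction k with
  | zero => exact hy₀
  | succ k ih => exact hT k ih

lemma mapsTo_iMap {d : ℕ} {c : ℝ} (hc : 0 ≤ c) : MapsTo (iMap d c) (Ici 0) (Ici 0) :=
  fun _ hy => fMap_nonneg zero_le_one (fMap_nonneg (by linarith) hy)

lemma mapsTo_jMap {d : ℕ} {c : ℝ} (hc : 0 ≤ c) : MapsTo (jMap d c) (Ici 0) (Ici 0) :=
  fun _ hy => fMap_nonneg (by linarith) (fMap_nonneg zero_le_one hy)

lemma nonautOrbit_le_psi_iterate_le {d : ℕ} {c : ℝ} {x : ℕ → ℝ} (hc0 : 0 ≤ c) (hc1 : c ≤ 1)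
    (hx : x ∈ Sabc 0 1 c) (k : ℕ) :
    nonautOrbit (iMap d) (fun k => (gMap d 1)^[2 * k] c) 0 k ≤ (psi d)^[2 * k] x 1 ∧
      (psi d)^[2 * k] x 1 ≤ nonautOrbit (jMap d) (fun k => (gMap d 1)^[2 * k + 1] c) 1 k := by
  induction k with
  | zero => exact ⟨hx.2.1, hx.2.2.1⟩
  | succ k ih =>
    have hck := (mapsTo_gMap_one (d := d)).iterate (2 * k) ⟨hc0, hc1⟩
    have hxk := psi_iterate_mem_Sabc (d := d) hc0 hc1 hx (2 * k)
    have hL0 : 0 ≤ nonautOrbit (iMap d) (fun k => (gMap d 1)^[2 * k] c) 0 k :=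
      nonautOrbit_mem (fun j => mapsTo_iMap (mapsTo_gMap_one.iterate (2 * j) ⟨hc0, hc1⟩).1)
        self_mem_Ici k
    rw [mul_add_one, iterate_succ_apply', iterate_succ_apply']
    refine ⟨iMap_le_psi_psi_one hck.2 hxk hL0 ih.1, ?_⟩
    have := psi_psi_one_le_jMap (d := d) hck.2 hxk ih.2
    rwa [← iterate_succ_apply' (gMap d 1)] at this

noncomputable def uCoord (y : ℝ) : ℝ := (1 + 2 * y)⁻¹

lemma uCoord_pos {y : ℝ} (hy : 0 ≤ y) : 0 < uCoord y := by
  unfold uCoord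
  positivity

lemma uCoord_le_one {y : ℝ} (hy : 0 ≤ y) : uCoord y ≤ 1 :=
  inv_le_one_of_one_le₀ (by linarith)

lemma inv_uCoord_sub_one_div_two (y : ℝ) : ((uCoord y)⁻¹ - 1) / 2 = y := by
  rw [uCoord, inv_inv]
  ring

lemma fMap_eq_pow_uCoord (d : ℕ) (α : ℝ) {y : ℝ} (hy : 0 ≤ y) :
    fMap d α y = ((α + (2 - α) * uCoord y) / 2) ^ d := by
  have : 1 + 2 * y ≠ 0 := by linarith
  rw [fMap, uCoord]
  congr 1
  field_simp
  ring

-- For `d = 7` the ratio `d s ^ (d - 1) / (1 + 2 s ^ d) ^ 2` peaks at about `0.986` (near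
-- `s = 0.87`); for `d = 8` it exceeds `1`.
lemma mul_pow_pred_le {d : ℕ} (hd2 : 2 ≤ d) (hd7 : d ≤ 7) {s : ℝ} (hs : 0 ≤ s) :
    d * s ^ (d - 1) ≤ 199 / 200 * (1 + 2 * s ^ d) ^ 2 := by
  interval_cases d
  · norm_num
    nlinarith [sq_nonneg (s ^ 2 - 1 / 6), sq_nonneg (s - 299 / 1000)]
  · norm_num
    nlinarith [sq_nonneg (s ^ 3 - 1 / 4), mul_nonneg hs (sq_nonneg (s - 209 / 500)),
      sq_nonneg (s - 209 / 500)]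
  · norm_num
    nlinarith [sq_nonneg (s ^ 4 - 3 / 10),
      mul_nonneg (pow_nonneg hs 2) (sq_nonneg (s - 529 / 1000)),
      mul_nonneg hs (sq_nonneg (s - 529 / 1000)), sq_nonneg (s - 529 / 1000)]
  · norm_num
    nlinarith [sq_nonneg (s ^ 5 - 1 / 3), mul_nonneg (pow_nonneg hs 3) (sq_nonneg (s - 637 / 1000)),
      mul_nonneg (pow_nonneg hs 2) (sq_nonneg (s - 637 / 1000)),
      mul_nonneg hs (sq_nonneg (s - 637 / 1000)), sq_nonneg (s - 637 / 1000)]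
  · norm_num
    nlinarith [sq_nonneg (s ^ 6 - 5 / 14), mul_nonneg (pow_nonneg hs 4) (sq_nonneg (s - 373 / 500)),
      mul_nonneg (pow_nonneg hs 3) (sq_nonneg (s - 373 / 500)),
      mul_nonneg (pow_nonneg hs 2) (sq_nonneg (s - 373 / 500)),
      mul_nonneg hs (sq_nonneg (s - 373 / 500)), sq_nonneg (s - 373 / 500)]
  · norm_num
    nlinarith [sq_nonneg (s ^ 7 - 3 / 8), mul_nonneg (pow_nonneg hs 5) (sq_nonneg (s - 431 / 500)),
      mul_nonneg (pow_nonneg hs 4) (sq_nonneg (s - 431 / 500)),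
      mul_nonneg (pow_nonneg hs 3) (sq_nonneg (s - 431 / 500)),
      mul_nonneg (pow_nonneg hs 2) (sq_nonneg (s - 431 / 500)),
      mul_nonneg hs (sq_nonneg (s - 431 / 500)), sq_nonneg (s - 431 / 500)]

lemma abs_uCoord_pow_sub_le {d : ℕ} (hd2 : 2 ≤ d) (hd7 : d ≤ 7) {s t : ℝ} (hs : 0 ≤ s)
    (ht : 0 ≤ t) : |uCoord (t ^ d) - uCoord (s ^ d)| ≤ 199 / 100 * |t - s| := by
  have hderiv : ∀ z ∈ Ici (0 : ℝ), HasDerivWithinAt (fun z => uCoord (z ^ d))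
      (-(2 * (d * z ^ (d - 1))) / (1 + 2 * z ^ d) ^ 2) (Ici 0) z := by
    intro z (hz : 0 ≤ z)
    have hpos : 0 < 1 + 2 * z ^ d := by positivity
    have h := (((hasDerivAt_pow d z).const_mul 2).const_add 1).inv hpos.ne'
    exact h.hasDerivWithinAt
  have hbound : ∀ z ∈ Ici (0 : ℝ),
      ‖-(2 * (d * z ^ (d - 1))) / (1 + 2 * z ^ d) ^ 2‖ ≤ 199 / 100 := by
    intro z (hz : 0 ≤ z)
    rw [Real.norm_eq_abs, abs_div, abs_neg, abs_of_nonneg (by positivity),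
      abs_of_nonneg (by positivity), div_le_iff₀ (by positivity)]
    linarith [mul_pow_pred_le hd2 hd7 hz]
  simpa only [Real.norm_eq_abs] using
    (convex_Ici 0).norm_image_sub_le_of_norm_hasDerivWithin_le hderiv hbound hs ht

lemma abs_uCoord_fMap_sub_le {d : ℕ} (hd2 : 2 ≤ d) (hd7 : d ≤ 7) {α α' y y' : ℝ}
    (hα : α ∈ Icc (1 : ℝ) 2) (hα' : α' ∈ Icc (1 : ℝ) 2) (hy : 0 ≤ y) (hy' : 0 ≤ y') :
    |uCoord (fMap d α y) - uCoord (fMap d α' y')| ≤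
      199 / 200 * (|α - α'| + |uCoord y - uCoord y'|) := by
  obtain ⟨hα1, hα2⟩ := hα
  obtain ⟨hα1', hα2'⟩ := hα'
  set u := uCoord y
  set u' := uCoord y'
  have hu := uCoord_pos hy
  have hu' := uCoord_pos hy'
  have hu1' := uCoord_le_one hy'
  have hs : 0 ≤ (α + (2 - α) * u) / 2 := by nlinarith
  have hs' : 0 ≤ (α' + (2 - α') * u') / 2 := by nlinarith
  have hdist : |(α + (2 - α) * u) / 2 - (α' + (2 - α') * u') / 2| ≤
      (|α - α'| + |u - u'|) / 2 := by
    have hsplit : (α + (2 - α) * u) / 2 - (α' + (2 - α') * u') / 2 =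
        ((α - α') * (1 - u') + (2 - α) * (u - u')) / 2 := by ring
    have h1 : |(α - α') * (1 - u')| ≤ |α - α'| := by
      rw [abs_mul]
      exact mul_le_of_le_one_right (abs_nonneg _) (abs_le.2 ⟨by linarith, by linarith⟩)
    have h2 : |(2 - α) * (u - u')| ≤ |u - u'| := by
      rw [abs_mul]
      exact mul_le_of_le_one_left (abs_nonneg _) (abs_le.2 ⟨by linarith, by linarith⟩)
    rw [hsplit, abs_div, abs_two]
    linarith [abs_add_le ((α - α') * (1 - u')) ((2 - α) * (u - u'))]
  rw [fMap_eq_pow_uCoord d α hy, fMap_eq_pow_uCoord d α' hy']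
  linarith [abs_uCoord_pow_sub_le hd2 hd7 hs' hs]

section contraction

variable {d : ℕ} {c c' y y' : ℝ}

lemma abs_uCoord_iMap_sub_le (hd2 : 2 ≤ d) (hd7 : d ≤ 7) (hc : c ∈ Icc (0 : ℝ) 1)
    (hc' : c' ∈ Icc (0 : ℝ) 1) (hy : 0 ≤ y) (hy' : 0 ≤ y') :
    |uCoord (iMap d c y) - uCoord (iMap d c' y')| ≤
      (199 / 200) ^ 2 * |uCoord y - uCoord y'| + |c - c'| := by
  have hα : 1 + c ∈ Icc (1 : ℝ) 2 := ⟨by linarith [hc.1], by linarith [hc.2]⟩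
  have hα' : 1 + c' ∈ Icc (1 : ℝ) 2 := ⟨by linarith [hc'.1], by linarith [hc'.2]⟩
  have hone : (1 : ℝ) ∈ Icc (1 : ℝ) 2 := ⟨le_rfl, one_le_two⟩
  have houter := abs_uCoord_fMap_sub_le hd2 hd7 hone hone
    (fMap_nonneg (d := d) (α := 1 + c) (by linarith [hc.1]) hy)
    (fMap_nonneg (d := d) (α := 1 + c') (by linarith [hc'.1]) hy')
  have hinner := abs_uCoord_fMap_sub_le (d := d) hd2 hd7 hα hα' hy hy'
  rw [sub_self, abs_zero, zero_add] at houter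
  rw [add_sub_add_left_eq_sub] at hinner
  unfold iMap
  nlinarith [abs_nonneg (c - c')]

lemma abs_uCoord_jMap_sub_le (hd2 : 2 ≤ d) (hd7 : d ≤ 7) (hc : c ∈ Icc (0 : ℝ) 1)
    (hc' : c' ∈ Icc (0 : ℝ) 1) (hy : 0 ≤ y) (hy' : 0 ≤ y') :
    |uCoord (jMap d c y) - uCoord (jMap d c' y')| ≤
      (199 / 200) ^ 2 * |uCoord y - uCoord y'| + |c - c'| := by
  have hα : 1 + c ∈ Icc (1 : ℝ) 2 := ⟨by linarith [hc.1], by linarith [hc.2]⟩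
  have hα' : 1 + c' ∈ Icc (1 : ℝ) 2 := ⟨by linarith [hc'.1], by linarith [hc'.2]⟩
  have hone : (1 : ℝ) ∈ Icc (1 : ℝ) 2 := ⟨le_rfl, one_le_two⟩
  have houter := abs_uCoord_fMap_sub_le hd2 hd7 hα hα'
    (fMap_nonneg (d := d) zero_le_one hy) (fMap_nonneg (d := d) zero_le_one hy')
  have hinner := abs_uCoord_fMap_sub_le (d := d) hd2 hd7 hone hone hy hy'
  rw [sub_self, abs_zero, zero_add] at hinner
  rw [add_sub_add_left_eq_sub] at houter
  unfold jMap
  nlinarith [abs_nonneg (c - c')]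

end contraction

lemma tendsto_zero_of_le_mul_add {q : ℝ} (hq0 : 0 ≤ q) (hq1 : q < 1) {a e : ℕ → ℝ}
    (ha : ∀ k, 0 ≤ a k) (he : Tendsto e atTop (𝓝 0)) (hrec : ∀ k, a (k + 1) ≤ q * a k + e k) :
    Tendsto a atTop (𝓝 0) := by
  rw [Metric.tendsto_atTop]
  intro ε hε
  obtain ⟨K, hK⟩ := eventually_atTop.1
    (he.eventually (Iio_mem_nhds (by positivity : 0 < (1 - q) * ε / 2)))
  have hbound : ∀ m, a (K + m) ≤ q ^ m * a K + ε / 2 := by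
    intro m
    induction m with
    | zero => simpa using (half_pos hε).le
    | succ m ih =>
      calc a (K + (m + 1)) ≤ q * a (K + m) + e (K + m) := hrec (K + m)
        _ ≤ q * (q ^ m * a K + ε / 2) + (1 - q) * ε / 2 := by
          gcongr
          exact (hK (K + m) (by omega)).le
        _ = q ^ (m + 1) * a K + ε / 2 := by ring
  obtain ⟨M, hM⟩ := eventually_atTop.1
    (((tendsto_pow_atTop_nhds_zero_of_lt_one hq0 hq1).mul_const (a K)).eventually
      (Iio_mem_nhds (show 0 * a K < ε / 2 by linarith)))
  refine ⟨K + M, fun n hn => ?_⟩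
  obtain ⟨m, rfl⟩ := Nat.exists_eq_add_of_le (le_trans (Nat.le_add_right K M) hn)
  rw [Real.dist_eq, sub_zero, abs_of_nonneg (ha _)]
  linarith [hbound m, hM m (by omega)]

lemma tendsto_nonautOrbit {T : ℝ → ℝ → ℝ} {q : ℝ} (hq0 : 0 ≤ q) (hq1 : q < 1)
    (hT : ∀ c ∈ Icc (0 : ℝ) 1, ∀ c' ∈ Icc (0 : ℝ) 1, ∀ y y' : ℝ, 0 ≤ y → 0 ≤ y' →
      |uCoord (T c y) - uCoord (T c' y')| ≤ q * |uCoord y - uCoord y'| + |c - c'|)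
    (hT0 : ∀ c ∈ Icc (0 : ℝ) 1, MapsTo (T c) (Ici 0) (Ici 0))
    {c : ℕ → ℝ} {c₀ a y₀ : ℝ} (hc : ∀ k, c k ∈ Icc 0 1) (hc₀ : c₀ ∈ Icc 0 1)
    (hlim : Tendsto c atTop (𝓝 c₀)) (ha : 0 ≤ a) (hfix : T c₀ a = a) (hy₀ : 0 ≤ y₀) :
    Tendsto (nonautOrbit T c y₀) atTop (𝓝 a) := by
  have hy : ∀ k, 0 ≤ nonautOrbit T c y₀ k :=
    nonautOrbit_mem (fun k => hT0 (c k) (hc k)) hy₀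
  have hdist : Tendsto (fun k => |uCoord (nonautOrbit T c y₀ k) - uCoord a|) atTop (𝓝 0) := by
    refine tendsto_zero_of_le_mul_add (e := fun k => |c k - c₀|) hq0 hq1 (fun k => abs_nonneg _)
      ?_ (fun k => ?_)
    · simpa using (hlim.sub_const c₀).abs
    · have := hT (c k) (hc k) c₀ hc₀ _ a (hy k) ha
      rwa [hfix] at this
  have hu : Tendsto (fun k => uCoord (nonautOrbit T c y₀ k)) atTop (𝓝 (uCoord a)) := by
    rw [tendsto_iff_norm_sub_tendsto_zero]
    simpa only [Real.norm_eq_abs] using hdist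
  simpa only [inv_uCoord_sub_one_div_two] using
    ((hu.inv₀ (uCoord_pos ha).ne').sub_const 1).div_const 2

lemma strictConvexOn_one_add_add_sq_div_two_add :
    StrictConvexOn ℝ (Ici 0) fun t : ℝ => (1 + t + t ^ 2) / (2 + t) := by
  refine ⟨convex_Ici 0, fun x (hx : 0 ≤ x) y (hy : 0 ≤ y) hxy a b ha hb hab => ?_⟩
  obtain rfl : b = 1 - a := by linarith
  have hz : 0 ≤ a * x + (1 - a) * y := by positivity
  have hgap : a * ((1 + x + x ^ 2) / (2 + x)) + (1 - a) * ((1 + y + y ^ 2) / (2 + y)) -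
      (1 + (a * x + (1 - a) * y) + (a * x + (1 - a) * y) ^ 2) / (2 + (a * x + (1 - a) * y)) =
      3 * (a * (1 - a) * (x - y) ^ 2) / ((2 + x) * (2 + y) * (2 + (a * x + (1 - a) * y))) := by
    field_simp
    ring
  simp only [smul_eq_mul]
  rw [← sub_pos, hgap]
  have hxy2 : 0 < (x - y) ^ 2 := sq_pos_of_ne_zero (sub_ne_zero.2 hxy)
  positivity

lemma strictConvexOn_gMap_one {d : ℕ} (hd : d ≠ 0) : StrictConvexOn ℝ (Ici 0) (gMap d 1) := by
  refine ⟨convex_Ici 0, fun x (hx : 0 ≤ x) y (hy : 0 ≤ y) hxy a b ha hb hab => ?_⟩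
  have hφ := strictConvexOn_one_add_add_sq_div_two_add.2 hx hy hxy ha hb hab
  simp only [smul_eq_mul, gMap_one_apply] at hφ ⊢
  calc ((1 + (a * x + b * y) + (a * x + b * y) ^ 2) / (2 + (a * x + b * y))) ^ d
      < (a * ((1 + x + x ^ 2) / (2 + x)) + b * ((1 + y + y ^ 2) / (2 + y))) ^ d :=
        pow_lt_pow_left₀ hφ (by positivity) hd
    _ ≤ a * ((1 + x + x ^ 2) / (2 + x)) ^ d + b * ((1 + y + y ^ 2) / (2 + y)) ^ d := by
        simpa only [smul_eq_mul] using (convexOn_pow d).2 (mem_Ici.2 (by positivity))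
          (mem_Ici.2 (by positivity)) ha.le hb.le hab

section fixedPoints

variable {f : ℝ → ℝ} {s : Set ℝ} {p q t : ℝ}

lemma StrictConvexOn.self_lt_apply_of_isFixedPt (hf : StrictConvexOn ℝ s f) (ht : t ∈ s)
    (hq : q ∈ s) (hfp : IsFixedPt f p) (hfq : IsFixedPt f q) (htp : t < p) (hpq : p < q) :
    t < f t := by
  have := hf.slope_strict_mono_adjacent ht hq htp hpq
  rw [hfp.eq, hfq.eq, div_self (sub_ne_zero.2 hpq.ne'), div_lt_one (sub_pos.2 htp)] at this
  linarith

lemma StrictConvexOn.apply_lt_self_of_isFixedPt (hf : StrictConvexOn ℝ s f) (hp : p ∈ s)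
    (hq : q ∈ s) (hfp : IsFixedPt f p) (hfq : IsFixedPt f q) (hpt : p < t) (htq : t < q) :
    f t < t := by
  have := hf.slope_strict_mono_adjacent hp hq hpt htq
  rw [hfp.eq, hfq.eq, div_lt_div_iff₀ (sub_pos.2 hpt) (sub_pos.2 htq)] at this
  nlinarith

end fixedPoints

section iterate

variable {α : Type*} [Preorder α] {f : α → α} {s : Set α} {x : α}

lemma MonotoneOn.monotone_iterate_of_le_map (hf : MonotoneOn f s) (hs : MapsTo f s s)
    (hx : x ∈ s) (hfx : x ≤ f x) : Monotone fun n => f^[n] x := by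
  refine monotone_nat_of_le_succ fun n => ?_
  induction n with
  | zero => exact hfx
  | succ n ih =>
    simpa only [iterate_succ_apply'] using hf (hs.iterate n hx) (hs.iterate (n + 1) hx) ih

lemma MonotoneOn.antitone_iterate_of_map_le (hf : MonotoneOn f s) (hs : MapsTo f s s)
    (hx : x ∈ s) (hfx : f x ≤ x) : Antitone fun n => f^[n] x := by
  refine antitone_nat_of_succ_le fun n => ?_
  induction n with
  | zero => exact hfx
  | succ n ih =>
    simpa only [iterate_succ_apply'] using hf (hs.iterate (n + 1) hx) (hs.iterate n hx) ih

end iterate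

lemma tendsto_iterate_of_monotone_or_antitone {f : ℝ → ℝ} {x a b p : ℝ}
    (hmem : ∀ n, f^[n] x ∈ Icc a b)
    (hmono : (Monotone fun n => f^[n] x) ∨ Antitone fun n => f^[n] x)
    (hcont : ∀ y ∈ Icc a b, ContinuousAt f y) (huniq : ∀ y ∈ Icc a b, IsFixedPt f y → y = p) :
    Tendsto (fun n => f^[n] x) atTop (𝓝 p) := by
  obtain ⟨L, hL⟩ : ∃ L, Tendsto (fun n => f^[n] x) atTop (𝓝 L) := by
    rcases hmono with h | h
    · exact ⟨_, tendsto_atTop_ciSup h ⟨b, by rintro _ ⟨n, rfl⟩; exact (hmem n).2⟩⟩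
    · exact ⟨_, tendsto_atTop_ciInf h ⟨a, by rintro _ ⟨n, rfl⟩; exact (hmem n).1⟩⟩
  have hLmem : L ∈ Icc a b := isClosed_Icc.mem_of_tendsto hL (Eventually.of_forall hmem)
  rwa [huniq L hLmem (isFixedPt_of_tendsto_iterate hL (hcont L hLmem))] at hL

theorem tendsto_gMap_one_iterate {d : ℕ} (hd : d ≠ 0) {cg c : ℝ} (hcg0 : 0 ≤ cg) (hcg1 : cg < 1)
    (hfix : IsFixedPt (gMap d 1) cg) (hc0 : 0 ≤ c) (hc1 : c < 1) :
    Tendsto (fun n => (gMap d 1)^[n] c) atTop (𝓝 cg) := by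
  have hconv := strictConvexOn_gMap_one hd
  have h1 : IsFixedPt (gMap d 1) 1 := gMap_one_one
  have hbelow : ∀ t, 0 ≤ t → t < cg → t < gMap d 1 t := fun t ht htc =>
    hconv.self_lt_apply_of_isFixedPt ht (mem_Ici.2 zero_le_one) hfix h1 htc hcg1
  have habove : ∀ t, cg < t → t < 1 → gMap d 1 t < t := fun t hct ht1 =>
    hconv.apply_lt_self_of_isFixedPt (mem_Ici.2 hcg0) (mem_Ici.2 zero_le_one) hfix h1 hct ht1
  set m := max c cg
  have hm1 : m < 1 := max_lt hc1 hcg1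
  have hGm : gMap d 1 m ≤ m := by
    rcases (le_max_right c cg).lt_or_eq with h | h
    · exact (habove m h hm1).le
    · rw [show m = cg from h.symm]
      exact hfix.eq.le
  have hmaps : MapsTo (gMap d 1) (Icc 0 m) (Icc 0 m) := fun t ht =>
    ⟨gMap_one_nonneg ht.1, (monotoneOn_gMap_one ht.1 (mem_Ici.2 (ht.1.trans ht.2)) ht.2).trans hGm⟩
  have hmono : MonotoneOn (gMap d 1) (Icc 0 m) :=
    monotoneOn_gMap_one.mono fun t ht => mem_Ici.2 ht.1
  have hc : c ∈ Icc 0 m := ⟨hc0, le_max_left c cg⟩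
  refine tendsto_iterate_of_monotone_or_antitone (fun n => hmaps.iterate n hc) ?_
    (fun t ht => continuousAt_gMap_one ht.1) fun t ht hft => ?_
  · rcases le_total c cg with h | h
    · refine Or.inl (hmono.monotone_iterate_of_le_map hmaps hc ?_)
      rcases h.lt_or_eq with h | rfl
      · exact (hbelow c hc0 h).le
      · exact hfix.eq.ge
    · refine Or.inr (hmono.antitone_iterate_of_map_le hmaps hc ?_)
      rcases h.lt_or_eq with h | rfl
      · exact (habove c h hc1).le
      · exact hfix.eq.le
  · rcases lt_trichotomy t cg with h | h | h
    · exact absurd hft.eq (hbelow t ht.1 h).ne'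
    · exact h
    · exact absurd hft.eq (habove t h (ht.2.trans_lt hm1)).ne

theorem stmt_15 (d : ℕ) (hd2 : 2 ≤ d) (hd7 : d ≤ 7)
    (cg : ℝ) (hcg : cg ∈ Set.Ioo (0 : ℝ) 1) (hcgfix : gMap d 1 cg = cg)
    (acg : ℝ) (hacg : acg ∈ Set.Ioo (0 : ℝ) 1) (hacgfix : iMap d cg acg = acg)
    (bcg : ℝ) (hbcg : bcg ∈ Set.Ioo (0 : ℝ) 1) (hbcgfix : jMap d cg bcg = bcg)
    (c : ℝ) (hc0 : 0 ≤ c) (hc1 : c < 1) (x : ℕ → ℝ) (hx : x ∈ Sabc 0 1 c)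
    (ε : ℝ) (hε : 0 < ε) :
    ∃ K : ℕ, ∀ k, K ≤ k →
      (acg - ε ≤ (psi d)^[2 * k] x 1 ∧ (psi d)^[2 * k] x 1 ≤ min 1 (bcg + ε)) ∧
      ∀ n, 2 ≤ n → (psi d)^[2 * k] x n ≤ min 1 (cg + ε) := by
  have hcgI : cg ∈ Icc (0 : ℝ) 1 := Ioo_subset_Icc_self hcg
  have hcs : ∀ k, (gMap d 1)^[k] c ∈ Icc 0 1 := fun k =>
    mapsTo_gMap_one.iterate k ⟨hc0, hc1.le⟩
  have hG := tendsto_gMap_one_iterate (by omega) hcgI.1 hcg.2 hcgfix hc0 hc1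
  have hGeven := hG.comp (strictMono_mul_left_of_pos two_pos).tendsto_atTop
  have hGodd := hG.comp ((strictMono_mul_left_of_pos two_pos).add_const 1).tendsto_atTop
  have hL := tendsto_nonautOrbit (by norm_num) (by norm_num)
    (fun c hc c' hc' y y' hy hy' => abs_uCoord_iMap_sub_le hd2 hd7 hc hc' hy hy')
    (fun c hc => mapsTo_iMap hc.1) (fun k => hcs (2 * k)) hcgI hGeven hacg.1.le hacgfix le_rfl
  have hU := tendsto_nonautOrbit (by norm_num) (by norm_num)
    (fun c hc c' hc' y y' hy hy' => abs_uCoord_jMap_sub_le hd2 hd7 hc hc' hy hy')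
    (fun c hc => mapsTo_jMap hc.1) (fun k => hcs (2 * k + 1)) hcgI hGodd hbcg.1.le hbcgfix
    zero_le_one
  obtain ⟨K, hK⟩ := eventually_atTop.1 <|
    (hL.eventually (Ioi_mem_nhds (sub_lt_self acg hε))).and <|
    (hU.eventually (Iio_mem_nhds (lt_add_of_pos_right bcg hε))).and
    (hGeven.eventually (Iio_mem_nhds (lt_add_of_pos_right cg hε)))
  refine ⟨K, fun k hk => ?_⟩
  obtain ⟨hLk, hUk, hck⟩ := hK k hk
  obtain ⟨hlow, hup⟩ := nonautOrbit_le_psi_iterate_le (d := d) hc0 hc1.le hx k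
  have hmem := psi_iterate_mem_Sabc (d := d) hc0 hc1.le hx (2 * k)
  refine ⟨⟨(mem_Ioi.1 hLk).le.trans hlow, le_min hmem.2.2.1 (hup.trans (mem_Iio.1 hUk).le)⟩,
    fun n hn => le_min ((hmem.2.2.2 n hn).trans (hcs _).2)
      ((hmem.2.2.2 n hn).trans (mem_Iio.1 hck).le)⟩
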